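/- arXiv:2407.08266 — 2 statements merged into one kernel-verified Lean document; each statement's English description precedes it below -/
import Mathlib

section
/- Let N ≥ 2, 1 < p ≤ N, 0 < q < N with q > p−1, and let μ be a nonnegative Borel measure on ℝ^N with μ(ℝ^N) = 1 and M_μ(x) < ∞. Then for D > 0, exp(W^D_{N/p,p}[μ](x)) ≤ 1 + D^{N/q} · (q/(N−q)) · ω_N^{1/q} · M_μ(x)^{1/q}, where W^D_{α,p}[μ](x) = ∫_0^D (μ(B_t(x))/t^{N−αp})^{1/(p−1)} dt/t with α = N/p (so the integrand is μ(B_t(x))^{1/(p−1)}/t). -/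
open MeasureTheory Metric ENNReal

lemma exp_le_inv_one_sub {x : ℝ} (hx1 : x < 1) : Real.exp x ≤ 1 / (1 - x) := by
  rw [le_div_iff₀ (by linarith)]
  calc Real.exp x * (1 - x) ≤ Real.exp x * Real.exp (-x) := by
        have := Real.add_one_le_exp (-x); nlinarith [Real.exp_pos x]
    _ = 1 := by rw [← Real.exp_add]; simp

lemma key1 {β a : ℝ} (hβ : 1 < β) (ha : 0 ≤ a) (ha1 : a ≤ 1) :
    Real.exp (a / β) ≤ 1 + a / (β - 1) := by
  have hβ0 : (0:ℝ) < β := by linarith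
  have hb1 : β - 1 ≠ 0 := ne_of_gt (by linarith)
  have h1 : a / β < 1 := by rw [div_lt_one hβ0]; linarith
  have hx : 0 ≤ a/(β-1) := div_nonneg ha (by linarith)
  have hy : 0 ≤ a/β := div_nonneg ha hβ0.le
  have e1 : a/(β-1)*(β-1) = a := div_mul_cancel₀ a hb1
  have e2 : a/β*β = a := div_mul_cancel₀ a hβ0.ne'
  calc Real.exp (a/β) ≤ 1 / (1 - a/β) := exp_le_inv_one_sub h1
    _ ≤ 1 + a / (β - 1) := by
      rw [div_le_iff₀ (by linarith)]
      nlinarith [mul_nonneg hx (sub_nonneg.mpr ha1), mul_nonneg (mul_nonneg hx hy) hβ0.le]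

lemma key2 {β a : ℝ} (hβ : 1 < β) (ha : 1 ≤ a) :
    Real.exp (1 / β) * a ^ (1/β) ≤ 1 + a / (β - 1) := by
  have hβ0 : (0:ℝ) < β := by linarith
  have hb1 : β - 1 ≠ 0 := ne_of_gt (by linarith)
  have hbern : a ^ (1/β) ≤ 1 + (1/β) * (a - 1) := by
    have := rpow_one_add_le_one_add_mul_self (s := a - 1) (by linarith)
      (p := 1/β) (by positivity) (by rw [div_le_one hβ0]; linarith)
    simpa using this
  have hexp : Real.exp (1/β) ≤ 1 / (1 - 1/β) := exp_le_inv_one_sub (by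
    rw [div_lt_one hβ0]; linarith)
  have h1 : 1 / (1 - 1/β) = β / (β - 1) := by
    rw [show 1 - 1/β = (β-1)/β by field_simp, one_div_div]
  have hrpos : (0:ℝ) ≤ a ^ (1/β) := Real.rpow_nonneg (by linarith) _
  calc Real.exp (1/β) * a ^ (1/β) ≤ (β/(β-1)) * (1 + (1/β)*(a-1)) := by
        apply mul_le_mul (h1 ▸ hexp) hbern hrpos
        exact div_nonneg hβ0.le (by linarith)
    _ = 1 + a / (β - 1) := by field_simp [hb1]; ring

lemma g_meas (C β : ℝ) (hβ : 1 < β) : Measurable (fun t : ℝ => min (1/t) (C * t ^ (β-1))) := by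
  apply Measurable.min
  · exact measurable_one.div measurable_id
  · exact ((Real.continuous_rpow_const (by linarith : (0:ℝ) ≤ β - 1)).measurable).const_mul C

lemma g_intble {C β D : ℝ} (hβ : 1 < β) (hC : 0 ≤ C) (hD : 0 < D) :
    IntervalIntegrable (fun t : ℝ => min (1/t) (C * t ^ (β-1))) volume 0 D := by
  have hG : IntervalIntegrable (fun t : ℝ => C * t ^ (β-1)) volume 0 D :=
    (intervalIntegral.intervalIntegrable_rpow' (by linarith)).const_mul C
  apply hG.mono_fun' ((g_meas C β hβ).aestronglyMeasurable)
  rw [Set.uIoc_of_le hD.le]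
  filter_upwards [ae_restrict_mem measurableSet_Ioc] with t ht
  have ht0 : 0 < t := ht.1
  have h1 : 0 ≤ min (1/t) (C * t ^ (β-1)) :=
    le_min (by positivity) (by positivity)
  rw [Real.norm_eq_abs, abs_of_nonneg h1]
  exact min_le_right _ _

lemma integral_min_exp {C β D : ℝ} (hβ : 1 < β) (hC : 0 ≤ C) (hD : 0 < D) :
    Real.exp (∫ t in Set.Ioo (0:ℝ) D, min (1/t) (C * t ^ (β-1))) ≤ 1 + C * D^β / (β-1) := by
  have hβ0 : (0:ℝ) < β := by linarith
  have hEq : ∫ t in Set.Ioo (0:ℝ) D, min (1/t) (C * t ^ (β-1)) =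
      ∫ t in (0:ℝ)..D, min (1/t) (C * t ^ (β-1)) := by
    rw [intervalIntegral.integral_of_le hD.le, MeasureTheory.integral_Ioc_eq_integral_Ioo]
  rw [hEq]
  have hmin_left : ∀ t : ℝ, 0 < t → C * t ^ β ≤ 1 → min (1/t) (C * t ^ (β-1)) = C * t ^ (β-1) := by
    intro t ht h
    apply min_eq_right
    rw [Real.rpow_sub ht, Real.rpow_one, mul_div_assoc', div_le_div_iff₀ ht ht]
    nlinarith [Real.rpow_pos_of_pos ht β]
  have hmin_right : ∀ t : ℝ, 0 < t → 1 ≤ C * t ^ β → min (1/t) (C * t ^ (β-1)) = 1/t := by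
    intro t ht h
    apply min_eq_left
    rw [Real.rpow_sub ht, Real.rpow_one, mul_div_assoc', div_le_div_iff₀ ht ht]
    nlinarith [Real.rpow_pos_of_pos ht β]
  by_cases hcase : C * D ^ β ≤ 1
  · have : ∫ t in (0:ℝ)..D, min (1/t) (C * t ^ (β-1)) = ∫ t in (0:ℝ)..D, C * t ^ (β-1) := by
      apply intervalIntegral.integral_congr
      intro t ht
      rw [Set.uIcc_of_le hD.le] at ht
      rcases eq_or_lt_of_le ht.1 with h0 | h0
      · simp [← h0, Real.zero_rpow (by linarith : β - 1 ≠ 0), div_zero]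
      · refine hmin_left t h0 ?_
        calc C * t ^ β ≤ C * D ^ β :=
              mul_le_mul_of_nonneg_left (Real.rpow_le_rpow h0.le ht.2 hβ0.le) hC
          _ ≤ 1 := hcase
    rw [this, intervalIntegral.integral_const_mul, integral_rpow (Or.inl (by linarith)),
      sub_add_cancel, Real.zero_rpow hβ0.ne']
    rw [show C * ((D ^ β - 0) / β) = (C * D ^ β) / β by ring]
    exact key1 hβ (by positivity) hcase
  · push_neg at hcase
    have hCpos : 0 < C := by
      rcases hC.lt_or_eq with h | h
      · exact h
      · exfalso; rw [← h] at hcase; simp at hcase; linarith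
    set t₀ : ℝ := C ^ (-(1/β)) with ht₀
    have ht₀pos : 0 < t₀ := Real.rpow_pos_of_pos hCpos _
    have hkey : C * t₀ ^ β = 1 := by
      rw [ht₀, ← Real.rpow_mul hC, show -(1/β) * β = -1 by field_simp,
        Real.rpow_neg_one, mul_inv_cancel₀ hCpos.ne']
    have ht₀D : t₀ < D := by
      by_contra h
      push_neg at h
      have : C * D ^ β ≤ C * t₀ ^ β :=
        mul_le_mul_of_nonneg_left (Real.rpow_le_rpow hD.le h hβ0.le) hC
      rw [hkey] at this; linarith
    have hsub1 : Set.uIcc (0:ℝ) t₀ ⊆ Set.uIcc (0:ℝ) D :=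
      Set.uIcc_subset_uIcc (Set.left_mem_uIcc)
        (by rw [Set.uIcc_of_le hD.le]; exact ⟨ht₀pos.le, ht₀D.le⟩)
    have hsub2 : Set.uIcc t₀ D ⊆ Set.uIcc (0:ℝ) D := by
      rw [Set.uIcc_of_le hD.le, Set.uIcc_of_le ht₀D.le]
      exact Set.Icc_subset_Icc ht₀pos.le le_rfl
    have hint := g_intble hβ hC hD
    have hsplit : ∫ t in (0:ℝ)..D, min (1/t) (C * t ^ (β-1)) =
        (∫ t in (0:ℝ)..t₀, min (1/t) (C * t ^ (β-1))) +
        ∫ t in t₀..D, min (1/t) (C * t ^ (β-1)) :=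
      (intervalIntegral.integral_add_adjacent_intervals
        (hint.mono_set hsub1) (hint.mono_set hsub2)).symm
    have hI1 : ∫ t in (0:ℝ)..t₀, min (1/t) (C * t ^ (β-1)) = 1/β := by
      have : ∫ t in (0:ℝ)..t₀, min (1/t) (C * t ^ (β-1)) = ∫ t in (0:ℝ)..t₀, C * t ^ (β-1) := by
        apply intervalIntegral.integral_congr
        intro t ht
        rw [Set.uIcc_of_le ht₀pos.le] at ht
        rcases eq_or_lt_of_le ht.1 with h0 | h0
        · simp [← h0, Real.zero_rpow (by linarith : β - 1 ≠ 0), div_zero]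
        · refine hmin_left t h0 ?_
          calc C * t ^ β ≤ C * t₀ ^ β :=
                mul_le_mul_of_nonneg_left (Real.rpow_le_rpow h0.le ht.2 hβ0.le) hC
            _ = 1 := hkey
      rw [this, intervalIntegral.integral_const_mul, integral_rpow (Or.inl (by linarith)),
        sub_add_cancel, Real.zero_rpow hβ0.ne']
      field_simp
      nlinarith [hkey]
    have hI2 : ∫ t in t₀..D, min (1/t) (C * t ^ (β-1)) = Real.log (D / t₀) := by
      have : ∫ t in t₀..D, min (1/t) (C * t ^ (β-1)) = ∫ t in t₀..D, 1/t := by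
        apply intervalIntegral.integral_congr
        intro t ht
        rw [Set.uIcc_of_le ht₀D.le] at ht
        have h0 : 0 < t := lt_of_lt_of_le ht₀pos ht.1
        refine hmin_right t h0 ?_
        calc (1:ℝ) = C * t₀ ^ β := hkey.symm
          _ ≤ C * t ^ β :=
            mul_le_mul_of_nonneg_left (Real.rpow_le_rpow ht₀pos.le ht.1 hβ0.le) hC
      rw [this]
      apply integral_one_div
      rw [Set.uIcc_of_le ht₀D.le]
      intro h
      exact absurd h.1 (not_le.mpr ht₀pos)
    rw [hsplit, hI1, hI2, Real.exp_add, Real.exp_log (div_pos hD ht₀pos)]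
    have hDt : D / t₀ = (C * D ^ β) ^ (1/β) := by
      rw [Real.mul_rpow hC (Real.rpow_nonneg hD.le β), ← Real.rpow_mul hD.le,
        mul_one_div_cancel hβ0.ne', Real.rpow_one, ht₀, div_eq_mul_inv,
        ← Real.rpow_neg hC, neg_neg, mul_comm]
    rw [hDt]
    exact key2 hβ hcase.le

theorem stmt6 (N : ℕ) (hN : 2 ≤ N) (p q : ℝ) (hp : 1 < p) (hpN : p ≤ (N : ℝ))
    (hq0 : 0 < q) (hqN : q < (N : ℝ)) (hpq : p - 1 < q)
    (μ : Measure (EuclideanSpace ℝ (Fin N))) (hμ : μ Set.univ = 1)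
    (x : EuclideanSpace ℝ (Fin N))
    (hM : (⨆ (r : ℝ) (_ : 0 < r), μ (ball x r) / volume (ball x r)) < ⊤)
    (D : ℝ) (hD : 0 < D) :
    Real.exp (∫ t in Set.Ioo (0 : ℝ) D, (μ (ball x t)).toReal ^ (1 / (p - 1)) / t) ≤
      1 + D ^ ((N : ℝ) / q) * (q / ((N : ℝ) - q)) *
          (volume (ball (0 : EuclideanSpace ℝ (Fin N)) 1)).toReal ^ (1 / q) *
          ((⨆ (r : ℝ) (_ : 0 < r), μ (ball x r) / volume (ball x r)).toReal) ^ (1 / q) := by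
  haveI : Nontrivial (EuclideanSpace ℝ (Fin N)) :=
    Module.nontrivial_of_finrank_pos (R := ℝ)
      (by rw [finrank_euclideanSpace_fin]; omega)
  set S : ℝ≥0∞ := ⨆ (r : ℝ) (_ : 0 < r), μ (ball x r) / volume (ball x r) with hSdef
  set M : ℝ := S.toReal with hMdef
  set ω : ℝ := (volume (ball (0 : EuclideanSpace ℝ (Fin N)) 1)).toReal with hωdef
  have hω_fin : volume (ball (0 : EuclideanSpace ℝ (Fin N)) 1) ≠ ⊤ := measure_ball_lt_top.ne
  have hω_pos : 0 < ω :=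
    ENNReal.toReal_pos (measure_ball_pos volume _ one_pos).ne' hω_fin
  have hM0 : (0:ℝ) ≤ M := ENNReal.toReal_nonneg
  have hp1 : (0:ℝ) < p - 1 := by linarith
  set β : ℝ := (N : ℝ) / q with hβdef
  have hβ : 1 < β := (one_lt_div hq0).mpr hqN
  set C : ℝ := (ω * M) ^ (1/q) with hCdef
  have hC : 0 ≤ C := Real.rpow_nonneg (by positivity) _
  -- pointwise bound on the integrand
  have hpt : ∀ t ∈ Set.Ioo (0:ℝ) D,
      (μ (ball x t)).toReal ^ (1 / (p - 1)) / t ≤ min (1/t) (C * t ^ (β-1)) := by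
    intro t ht
    have ht0 : 0 < t := ht.1
    have hm1 : (μ (ball x t)).toReal ≤ 1 := by
      have h1 : μ (ball x t) ≤ 1 := hμ ▸ measure_mono (Set.subset_univ _)
      simpa using ENNReal.toReal_mono ENNReal.one_ne_top h1
    have hm0 : (0:ℝ) ≤ (μ (ball x t)).toReal := ENNReal.toReal_nonneg
    have hmM : (μ (ball x t)).toReal ≤ ω * M * t ^ (N:ℕ) := by
      have hvol_ne_zero : volume (ball x t) ≠ 0 := (measure_ball_pos volume _ ht0).ne'
      have hvol_ne_top : volume (ball x t) ≠ ⊤ := measure_ball_lt_top.ne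
      have hdiv : μ (ball x t) / volume (ball x t) ≤ S :=
        le_iSup₂ (f := fun r (_ : 0 < r) => μ (ball x r) / volume (ball x r)) t ht0
      have hle : μ (ball x t) ≤ S * volume (ball x t) :=
        (ENNReal.div_le_iff_le_mul (Or.inl hvol_ne_zero) (Or.inl hvol_ne_top)).mp hdiv
      have hfin : S * volume (ball x t) ≠ ⊤ := ENNReal.mul_ne_top hM.ne hvol_ne_top
      calc (μ (ball x t)).toReal ≤ (S * volume (ball x t)).toReal :=
            ENNReal.toReal_mono hfin hle
        _ = M * (volume (ball x t)).toReal := by rw [ENNReal.toReal_mul]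
        _ = ω * M * t ^ (N:ℕ) := by
            rw [MeasureTheory.Measure.addHaar_ball volume x ht0.le, finrank_euclideanSpace_fin,
              ENNReal.toReal_mul, ENNReal.toReal_ofReal (by positivity)]
            ring
    have hstep1 : (μ (ball x t)).toReal ^ (1 / (p - 1)) ≤ (μ (ball x t)).toReal ^ (1/q) := by
      rcases hm0.lt_or_eq with h0 | h0
      · exact Real.rpow_le_rpow_of_exponent_ge h0 hm1
          (by
            rw [div_le_div_iff₀ hq0 hp1]
            linarith)
      · rw [← h0, Real.zero_rpow (by positivity : (1:ℝ)/(p-1) ≠ 0),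
          Real.zero_rpow (by positivity : (1:ℝ)/q ≠ 0)]
    have hstep2 : (μ (ball x t)).toReal ^ (1/q) ≤ C * t ^ β := by
      calc (μ (ball x t)).toReal ^ (1/q) ≤ (ω * M * t ^ (N:ℕ)) ^ (1/q) :=
            Real.rpow_le_rpow hm0 hmM (by positivity)
        _ = C * t ^ β := by
            rw [Real.mul_rpow (by positivity) (by positivity), ← hCdef,
              ← Real.rpow_natCast t N, ← Real.rpow_mul ht0.le, mul_one_div, ← hβdef]
    apply le_min
    · have h1 : (μ (ball x t)).toReal ^ (1 / (p - 1)) ≤ 1 :=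
        hstep1.trans (Real.rpow_le_one hm0 hm1 (by positivity))
      gcongr
    · have h1 : (μ (ball x t)).toReal ^ (1 / (p - 1)) ≤ C * t ^ β := hstep1.trans hstep2
      calc (μ (ball x t)).toReal ^ (1 / (p - 1)) / t ≤ (C * t ^ β) / t := by gcongr
        _ = C * t ^ (β - 1) := by
            rw [Real.rpow_sub ht0, Real.rpow_one]; ring
  -- measurability and integrability
  have hmeas_h : Measurable (fun t : ℝ => (μ (ball x t)).toReal ^ (1 / (p - 1)) / t) := by
    have h1 : Measurable (fun t : ℝ => μ (ball x t)) := by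
      apply Monotone.measurable
      intro a b hab
      exact measure_mono (ball_subset_ball hab)
    exact (((Real.continuous_rpow_const (by positivity : (0:ℝ) ≤ 1/(p-1))).measurable).comp
      h1.ennreal_toReal).div measurable_id
  have hGint : IntegrableOn (fun t : ℝ => min (1/t) (C * t ^ (β-1))) (Set.Ioo 0 D) :=
    ((g_intble hβ hC hD).1).mono_set Set.Ioo_subset_Ioc_self
  have hhint : IntegrableOn
      (fun t : ℝ => (μ (ball x t)).toReal ^ (1 / (p - 1)) / t) (Set.Ioo 0 D) := by
    apply Integrable.mono' hGint hmeas_h.aestronglyMeasurable.restrict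
    filter_upwards [ae_restrict_mem measurableSet_Ioo] with t ht
    rw [Real.norm_eq_abs, abs_of_nonneg (div_nonneg (Real.rpow_nonneg ENNReal.toReal_nonneg _) ht.1.le)]
    exact hpt t ht
  have hle : (∫ t in Set.Ioo (0:ℝ) D, (μ (ball x t)).toReal ^ (1 / (p - 1)) / t) ≤
      ∫ t in Set.Ioo (0:ℝ) D, min (1/t) (C * t ^ (β-1)) :=
    setIntegral_mono_on hhint hGint measurableSet_Ioo hpt
  have hNq : (0:ℝ) < (N:ℝ) - q := by linarith
  have hfinal : C * D ^ β / (β - 1) =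
      D ^ β * (q / ((N:ℝ) - q)) * ω ^ (1/q) * M ^ (1/q) := by
    rw [hCdef, Real.mul_rpow hω_pos.le hM0,
      show β - 1 = ((N:ℝ) - q)/q by rw [hβdef]; field_simp]
    field_simp
  calc Real.exp (∫ t in Set.Ioo (0:ℝ) D, (μ (ball x t)).toReal ^ (1 / (p - 1)) / t)
      ≤ Real.exp (∫ t in Set.Ioo (0:ℝ) D, min (1/t) (C * t ^ (β-1))) := Real.exp_le_exp.mpr hle
    _ ≤ 1 + C * D ^ β / (β - 1) := integral_min_exp hβ hC hD
    _ = 1 + D ^ β * (q / ((N:ℝ) - q)) * ω ^ (1/q) * M ^ (1/q) := by rw [hfinal]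
end

section
/- Let Ω ⊂ ℝ^N be a bounded domain with diameter D, let 1 < p ≤ N, α = N/p, and let μ be a finite nonnegative Radon measure supported in Ω with μ(Ω) > 0. Then for any δ ∈ (0,1), ∫_Ω exp( N(1−δ) W^D_{α,p}[μ](x) / μ(Ω)^{1/(p−1)} ) dx ≤ c(N) |B_D(0)| / δ^{N+1}, where W^D_{α,p}[μ](x) = ∫_0^D μ(B_t(x))^{1/(p−1)} dt/t. -/
/-!
Normalise `μ` to a probability measure `P` and put `n = N - 1`, so that `q = 1/(p-1) ≥ 1/n`.
Cutting `P(B)^q` at the dyadic levels `2^{-(k+1)n}` gives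
`P(B)^q ≤ ∑ₖ 2^{-(k+1)} 𝟙[P(B) ≥ 2^{-(k+1)n}]`, hence the Wolff potential is at most
`∑ₖ 2^{-(k+1)} ℓₖ(x)`, where `ℓₖ(x) = ∫₀^D 𝟙[P(B_t(x)) ≥ 2^{-(k+1)n}] dt/t`.
Its exponential is an infinite product, and Hölder's inequality with the weights `2^{-(k+1)}`
reduces the integral of the product to the integrals of `exp(s ℓₖ)`.
By Fubini, the centres of the balls of radius `r` carrying mass `c` fill a volume of at most
`|B_r|/c`; as `ℓₖ(x) > m` forces `P(B_{De^{-m}}(x)) ≥ 2^{-(k+1)n}`, a layer-cake summation gives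
`∫_Ω exp(s ℓₖ) ≲ 2^{(k+1)n} |B_D| e^N/δ` for `s = N(1-δ)`, and the weighted geometric mean
of the factors `2^{(k+1)n}` is at most `4^n`.
-/

open MeasureTheory Metric ENNReal Set

lemma le_tsum_indicator_inv_two_pow {ρ : ℝ≥0∞} (hρ : ρ ≤ 1) :
    ρ ≤ ∑' k : ℕ, {k : ℕ | 2⁻¹ ^ (k + 1) ≤ ρ}.indicator (fun k => (2⁻¹ : ℝ≥0∞) ^ (k + 1)) k := by
  classical
  rcases eq_or_ne ρ 0 with rfl | hρ0
  · exact zero_le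
  have hex : ∃ k, (2⁻¹ : ℝ≥0∞) ^ (k + 1) ≤ ρ := by
    obtain ⟨k, hk⟩ := exists_inv_two_pow_lt hρ0
    exact ⟨k, (pow_le_pow_of_le_one (by norm_num) (by norm_num) k.le_succ).trans hk.le⟩
  set k₀ := Nat.find hex
  have hρk₀ : ρ ≤ 2⁻¹ ^ k₀ := by
    by_cases h : k₀ = 0
    · simpa [h] using hρ
    · exact (not_le.1 (Nat.find_min hex (Nat.sub_one_lt h))).le.trans_eq
        (by rw [Nat.sub_add_cancel (Nat.one_le_iff_ne_zero.2 h)])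
  have htail : ∀ j : ℕ, j + k₀ ∈ {k : ℕ | (2⁻¹ : ℝ≥0∞) ^ (k + 1) ≤ ρ} := fun j =>
    (pow_le_pow_of_le_one (by norm_num) (by norm_num) (by omega)).trans (Nat.find_spec hex)
  calc ρ ≤ 2⁻¹ ^ k₀ := hρk₀
    _ = ∑' j : ℕ, (2⁻¹ : ℝ≥0∞) ^ (j + k₀ + 1) := by
      have hsplit : ∀ j : ℕ, (2⁻¹ : ℝ≥0∞) ^ (j + k₀ + 1) = 2⁻¹ ^ (k₀ + 1) * 2⁻¹ ^ j := fun j => by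
        ring
      rw [tsum_congr hsplit, ENNReal.tsum_mul_left, ENNReal.tsum_geometric, ENNReal.one_sub_inv_two,
        inv_inv, pow_succ, mul_assoc, ENNReal.inv_mul_cancel two_ne_zero ofNat_ne_top, mul_one]
    _ = ∑' j : ℕ,
          {k : ℕ | 2⁻¹ ^ (k + 1) ≤ ρ}.indicator (fun k => (2⁻¹ : ℝ≥0∞) ^ (k + 1)) (j + k₀) :=
      tsum_congr fun j => (indicator_of_mem (htail j) (fun k => (2⁻¹ : ℝ≥0∞) ^ (k + 1))).symm
    _ ≤ _ := ENNReal.tsum_comp_le_tsum_of_injective (add_left_injective k₀) _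

lemma rpow_le_tsum_indicator_inv_two_pow {r : ℝ≥0∞} (hr : r ≤ 1) {n : ℕ} (hn : n ≠ 0) {q : ℝ}
    (hq : (n : ℝ)⁻¹ ≤ q) :
    r ^ q ≤ ∑' k : ℕ, {k : ℕ | 2⁻¹ ^ ((k + 1) * n) ≤ r}.indicator
      (fun k => (2⁻¹ : ℝ≥0∞) ^ (k + 1)) k := by
  have hn' : (0 : ℝ) < n := by positivity
  have hlevel : {k : ℕ | (2⁻¹ : ℝ≥0∞) ^ ((k + 1) * n) ≤ r} =
      {k | 2⁻¹ ^ (k + 1) ≤ r ^ (n : ℝ)⁻¹} := by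
    ext k
    simp only [mem_ofPred_eq, ENNReal.le_rpow_inv_iff hn', rpow_natCast, pow_mul]
  rw [hlevel]
  exact (rpow_le_rpow_of_exponent_ge hr hq).trans
    (le_tsum_indicator_inv_two_pow (rpow_le_one hr (by positivity)))

lemma sum_range_inv_two_pow_succ_le_one (K : ℕ) :
    ∑ k ∈ Finset.range K, (2⁻¹ : ℝ) ^ (k + 1) ≤ 1 := by
  have h := sum_geometric_two_le K
  simp only [one_div] at h
  simp only [pow_succ, ← Finset.sum_mul]
  linarith

lemma sum_range_succ_mul_inv_two_pow_succ_le_two (K : ℕ) :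
    ∑ k ∈ Finset.range K, ((k : ℝ) + 1) * (2⁻¹ : ℝ) ^ (k + 1) ≤ 2 := by
  have hsum := hasSum_coe_mul_geometric_of_norm_lt_one (𝕜 := ℝ) (r := 2⁻¹) (by norm_num)
  rw [show (2⁻¹ : ℝ) / (1 - 2⁻¹) ^ 2 = 2 by norm_num] at hsum
  have h := sum_le_hasSum (Finset.range (K + 1)) (fun n _ => by positivity) hsum
  rw [Finset.sum_range_succ'] at h
  push_cast at h
  linarith

lemma four_pow_mul_one_add_exp_div_le {N : ℕ} (hN : 1 ≤ N) {δ : ℝ} (hδ0 : 0 < δ) (hδ1 : δ ≤ 1) :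
    4 ^ (N - 1) * (1 + Real.exp (N * (1 - δ)) / (1 - Real.exp (N * (1 - δ) - N))) ≤
      3 * 4 ^ N * Real.exp N / δ ^ (N + 1) := by
  have hN' : (1 : ℝ) ≤ N := by exact_mod_cast hN
  have hexp : Real.exp (N * (1 - δ) - N) ≤ 1 - δ / 2 :=
    calc Real.exp (N * (1 - δ) - N) ≤ (Real.exp δ)⁻¹ := by
          rw [← Real.exp_neg]; exact Real.exp_le_exp.2 (by nlinarith)
      _ ≤ (1 + δ)⁻¹ := inv_anti₀ (by positivity) (by linarith [Real.add_one_le_exp δ])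
      _ ≤ 1 - δ / 2 := by rw [inv_le_iff_one_le_mul₀ (by positivity)]; nlinarith
  have hexpN : Real.exp (N * (1 - δ)) ≤ Real.exp N := Real.exp_le_exp.2 (by nlinarith)
  have hfrac : Real.exp (N * (1 - δ)) / (1 - Real.exp (N * (1 - δ) - N)) ≤ 2 * Real.exp N / δ := by
    rw [div_le_div_iff₀ (by linarith) hδ0]
    nlinarith [Real.exp_pos N]
  have hone : 1 ≤ Real.exp N / δ :=
    (one_le_div₀ hδ0).2 (hδ1.trans (Real.one_le_exp (by linarith)))
  have hG : 0 ≤ Real.exp (N * (1 - δ)) / (1 - Real.exp (N * (1 - δ) - N)) :=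
    div_nonneg (Real.exp_pos _).le (by linarith)
  calc 4 ^ (N - 1) * (1 + Real.exp (N * (1 - δ)) / (1 - Real.exp (N * (1 - δ) - N)))
      ≤ 4 ^ N * (3 * Real.exp N / δ) :=
        mul_le_mul (pow_le_pow_right₀ (by norm_num) (by omega))
          (by linarith [show 3 * Real.exp N / δ = Real.exp N / δ + 2 * Real.exp N / δ by ring])
          (by linarith) (by positivity)
    _ ≤ 4 ^ N * (3 * Real.exp N / δ ^ (N + 1)) := by
        gcongr
        exact pow_le_of_le_one hδ0.le hδ1 (by omega)
    _ = 3 * 4 ^ N * Real.exp N / δ ^ (N + 1) := by ring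

lemma ENNReal.rpow_sum_of_nonneg {ι : Type*} (x : ℝ≥0∞) {s : Finset ι} {p : ι → ℝ}
    (hp : ∀ i ∈ s, 0 ≤ p i) : x ^ (∑ i ∈ s, p i) = ∏ i ∈ s, x ^ p i := by
  classical
  induction s using Finset.induction_on with
  | empty => simp
  | insert i s hi ih =>
    rw [Finset.sum_insert hi, Finset.prod_insert hi,
      ENNReal.rpow_add_of_nonneg _ _ (hp i (Finset.mem_insert_self i s))
        (Finset.sum_nonneg fun j hj => hp j (Finset.mem_insert_of_mem hj)),
      ih fun j hj => hp j (Finset.mem_insert_of_mem hj)]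

lemma prod_pow_succ_mul_rpow_mul_rpow_one_sub_sum (b Y : ℝ≥0∞) {K : ℕ} {a : ℕ → ℝ}
    (ha : ∀ k ∈ Finset.range K, 0 ≤ a k) (ha1 : ∑ k ∈ Finset.range K, a k ≤ 1) :
    (∏ k ∈ Finset.range K, (b ^ (k + 1) * Y) ^ a k) * Y ^ (1 - ∑ k ∈ Finset.range K, a k) =
      b ^ (∑ k ∈ Finset.range K, ((k : ℝ) + 1) * a k) * Y := by
  have hfactor : ∀ k ∈ Finset.range K,
      (b ^ (k + 1) * Y) ^ a k = b ^ (((k : ℝ) + 1) * a k) * Y ^ a k := fun k hk => by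
    rw [ENNReal.mul_rpow_of_nonneg _ _ (ha k hk), ← ENNReal.rpow_natCast, ← ENNReal.rpow_mul]
    push_cast
    rfl
  rw [Finset.prod_congr rfl hfactor, Finset.prod_mul_distrib,
    ← ENNReal.rpow_sum_of_nonneg _ fun k hk => mul_nonneg (by positivity) (ha k hk),
    ← ENNReal.rpow_sum_of_nonneg _ ha, mul_assoc,
    ← ENNReal.rpow_add_of_nonneg _ _ (Finset.sum_nonneg ha) (sub_nonneg.2 ha1), add_sub_cancel,
    ENNReal.rpow_one]

lemma ofReal_exp_le_iSup_prod_rpow {w : ℝ} {a : ℕ → ℝ} (ha : ∀ k, 0 ≤ a k) {ℓ : ℕ → ℝ≥0∞}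
    (h : ENNReal.ofReal w ≤ ∑' k, ENNReal.ofReal (a k) * ℓ k) :
    ENNReal.ofReal (Real.exp w) ≤ ⨆ K, ∏ k ∈ Finset.range K, EReal.exp (ℓ k) ^ a k := by
  set g : ℝ≥0∞ → ℝ≥0∞ := fun y => EReal.exp y
  have hg_cont : Continuous g := EReal.expHomeomorph.continuous.comp continuous_coe_ennreal_ereal
  have hg_mono : Monotone g := fun _ _ hyz =>
    EReal.exp_monotone (EReal.coe_ennreal_le_coe_ennreal_iff.2 hyz)
  have hg_sum : ∀ K, g (∑ k ∈ Finset.range K, ENNReal.ofReal (a k) * ℓ k) =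
      ∏ k ∈ Finset.range K, EReal.exp (ℓ k) ^ a k := by
    intro K
    induction K with
    | zero => simp [g]
    | succ K ih =>
      rw [Finset.sum_range_succ, Finset.prod_range_succ, ← ih]
      simp only [g, EReal.coe_ennreal_add, EReal.exp_add, EReal.coe_ennreal_mul,
        EReal.coe_ennreal_ofReal, max_eq_left (ha K), mul_comm _ (ℓ K : EReal), EReal.exp_mul]
  calc ENNReal.ofReal (Real.exp w) ≤ g (ENNReal.ofReal w) := by
        simp only [g, EReal.coe_ennreal_ofReal, EReal.exp_coe]
        exact ENNReal.ofReal_le_ofReal (Real.exp_le_exp.2 (le_max_left _ _))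
    _ ≤ g (∑' k, ENNReal.ofReal (a k) * ℓ k) := hg_mono h
    _ ≤ ⨆ K, g (∑ k ∈ Finset.range K, ENNReal.ofReal (a k) * ℓ k) :=
        le_of_tendsto' ((hg_cont.tendsto _).comp (ENNReal.tendsto_nat_tsum _))
          fun K => le_iSup (fun K => g (∑ k ∈ Finset.range K, ENNReal.ofReal (a k) * ℓ k)) K
    _ = _ := by simp only [hg_sum]

lemma lintegral_prod_rpow_le_of_sum_le_one {α ι : Type*} [MeasurableSpace α] {μ : Measure α}
    (s : Finset ι) {f : ι → α → ℝ≥0∞} (hf : ∀ i ∈ s, AEMeasurable (f i) μ) {p : ι → ℝ}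
    (hp : ∑ i ∈ s, p i ≤ 1) (h2p : ∀ i ∈ s, 0 ≤ p i) :
    ∫⁻ a, ∏ i ∈ s, f i a ^ p i ∂μ ≤
      (∏ i ∈ s, (∫⁻ a, f i a ∂μ) ^ p i) * μ univ ^ (1 - ∑ i ∈ s, p i) := by
  classical
  have hHolder := ENNReal.lintegral_prod_norm_pow_le (μ := μ) (Finset.insertNone s)
    (f := fun i => i.elim (fun _ => 1) f) (p := fun i => i.elim (1 - ∑ i ∈ s, p i) p)
    (by rintro (_ | i) hi; exacts [aemeasurable_const, hf i (Finset.some_mem_insertNone.1 hi)])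
    (by simp [Finset.sum_insertNone])
    (by rintro (_ | i) hi; exacts [sub_nonneg.2 hp, h2p i (Finset.some_mem_insertNone.1 hi)])
  simpa [Finset.prod_insertNone, mul_comm] using hHolder

lemma ofReal_integral_le_lintegral_ofReal {α : Type*} [MeasurableSpace α] {μ : Measure α}
    {f : α → ℝ} (hf : 0 ≤ᵐ[μ] f) :
    ENNReal.ofReal (∫ x, f x ∂μ) ≤ ∫⁻ x, ENNReal.ofReal (f x) ∂μ := by
  by_cases hfi : Integrable f μ
  · exact (ofReal_integral_eq_lintegral_ofReal hfi hf).le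
  · simp [integral_undef hfi]

lemma lintegral_Icc_ofReal_inv {r D : ℝ} (hr : 0 < r) (hrD : r ≤ D) :
    ∫⁻ t in Icc r D, ENNReal.ofReal t⁻¹ = ENNReal.ofReal (Real.log (D / r)) := by
  have hpos : ∀ t ∈ Icc r D, 0 < t := fun t ht => hr.trans_le ht.1
  rw [← ofReal_integral_eq_lintegral_ofReal
      ((continuousOn_inv₀.mono fun t ht => (hpos t ht).ne').integrableOn_Icc)
      (ae_restrict_of_forall_mem measurableSet_Icc fun t ht => (inv_pos.2 (hpos t ht)).le),
    integral_Icc_eq_integral_Ioc, ← intervalIntegral.integral_of_le hrD,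
    integral_inv_of_pos hr (hr.trans_le hrD)]

lemma tsum_ofReal_exp_mul_exp_neg_pow {s : ℝ} {N : ℕ} (hsN : s < N) :
    ∑' n : ℕ, ENNReal.ofReal (Real.exp (s * (n + 1))) * ENNReal.ofReal (Real.exp (-n) ^ N) =
      ENNReal.ofReal (Real.exp s / (1 - Real.exp (s - N))) := by
  have hq : Real.exp (s - N) < 1 := Real.exp_lt_one_iff.2 (by linarith)
  have hterm : ∀ n : ℕ, ENNReal.ofReal (Real.exp (s * (n + 1))) * ENNReal.ofReal (Real.exp (-n) ^ N)
      = ENNReal.ofReal (Real.exp s) * ENNReal.ofReal (Real.exp (s - N)) ^ n := fun n => by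
    rw [← ENNReal.ofReal_pow (Real.exp_pos _).le, ← ENNReal.ofReal_mul (Real.exp_pos _).le,
      ← ENNReal.ofReal_mul (Real.exp_pos _).le, ← Real.exp_nat_mul, ← Real.exp_nat_mul,
      ← Real.exp_add, ← Real.exp_add]
    ring_nf
  rw [tsum_congr hterm, ENNReal.tsum_mul_left, ENNReal.tsum_geometric, ← ENNReal.ofReal_one,
    ← ENNReal.ofReal_sub _ (Real.exp_pos _).le, ← ENNReal.ofReal_inv_of_pos (by linarith),
    ← ENNReal.ofReal_mul (Real.exp_pos _).le, div_eq_mul_inv]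

section BallMass

variable {X : Type*} [PseudoMetricSpace X] [MeasurableSpace X]

def heavyBallCenters (P : Measure X) (c : ℝ≥0∞) (r : ℝ) : Set X :=
  {x | c ≤ P (ball x r)}

/-- `levelPotential P c D x = log (D / τ)` for the least radius `τ ≤ D` beyond which the balls
around `x` carry `P`-mass at least `c`; it is infinite when `x` is an atom of mass at least `c`. -/
noncomputable def levelPotential (P : Measure X) (c : ℝ≥0∞) (D : ℝ) (x : X) : ℝ≥0∞ :=
  ∫⁻ t in Ioo 0 D, {t | c ≤ P (ball x t)}.indicator (fun t => ENNReal.ofReal t⁻¹) t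

noncomputable def levelMajorant (P : Measure X) (c : ℝ≥0∞) (D s : ℝ) (x : X) : ℝ≥0∞ :=
  1 + ∑' n : ℕ, ENNReal.ofReal (Real.exp (s * (n + 1))) *
    (heavyBallCenters P c (D * Real.exp (-n))).indicator 1 x

lemma measurable_measure_ball_radius (P : Measure X) (x : X) :
    Measurable fun t : ℝ => P (ball x t) :=
  Monotone.measurable fun _ _ h => measure_mono (ball_subset_ball h)

lemma levelPotential_le_log {P : Measure X} {c : ℝ≥0∞} {D r : ℝ} {x : X} (hr : 0 < r)
    (hrD : r ≤ D) (hx : x ∉ heavyBallCenters P c r) :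
    levelPotential P c D x ≤ ENNReal.ofReal (Real.log (D / r)) := by
  have hlevel : {t | c ≤ P (ball x t)} ⊆ Ici r := fun t ht =>
    not_lt.1 fun htr => hx (ht.trans (measure_mono (ball_subset_ball htr.le)))
  calc levelPotential P c D x
      ≤ ∫⁻ t in Ioo 0 D, (Ici r).indicator (fun t => ENNReal.ofReal t⁻¹) t :=
        lintegral_mono fun t => indicator_le_indicator_of_subset hlevel (fun _ => zero_le) t
    _ = ∫⁻ t in Ici r ∩ Ioo 0 D, ENNReal.ofReal t⁻¹ := by
        rw [lintegral_indicator measurableSet_Ici, Measure.restrict_restrict measurableSet_Ici]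
    _ ≤ ∫⁻ t in Icc r D, ENNReal.ofReal t⁻¹ :=
        lintegral_mono_set fun t ht => ⟨ht.1, ht.2.2.le⟩
    _ = ENNReal.ofReal (Real.log (D / r)) := lintegral_Icc_ofReal_inv hr hrD

lemma ofReal_exp_le_levelMajorant {P : Measure X} {c : ℝ≥0∞} {D s : ℝ} {x : X} {m : ℕ}
    (hx : x ∈ heavyBallCenters P c (D * Real.exp (-m))) :
    ENNReal.ofReal (Real.exp (s * (m + 1))) ≤ levelMajorant P c D s x := by
  calc ENNReal.ofReal (Real.exp (s * (m + 1)))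
      = ENNReal.ofReal (Real.exp (s * (m + 1))) *
          (heavyBallCenters P c (D * Real.exp (-m))).indicator 1 x := by
        rw [indicator_of_mem hx, Pi.one_apply, mul_one]
    _ ≤ levelMajorant P c D s x :=
        (ENNReal.le_tsum (f := fun n : ℕ => ENNReal.ofReal (Real.exp (s * (n + 1))) *
          (heavyBallCenters P c (D * Real.exp (-n))).indicator 1 x) m).trans le_add_self

lemma levelMajorant_eq_top {P : Measure X} {c : ℝ≥0∞} {D s : ℝ} (hs : 0 ≤ s) {x : X}
    (hx : ∀ m : ℕ, x ∈ heavyBallCenters P c (D * Real.exp (-m))) :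
    levelMajorant P c D s x = ∞ := by
  refine top_unique (le_add_left ?_)
  refine (ENNReal.tsum_const_eq_top_of_ne_zero one_ne_zero).symm.le.trans
    (ENNReal.tsum_le_tsum fun m => ?_)
  rw [indicator_of_mem (hx m), Pi.one_apply, mul_one]
  exact ENNReal.one_le_ofReal.2 (Real.one_le_exp (by positivity))

lemma exp_levelPotential_rpow_le_levelMajorant (P : Measure X) (c : ℝ≥0∞) {D s : ℝ} (hD : 0 < D)
    (hs : 0 ≤ s) (x : X) :
    EReal.exp (levelPotential P c D x) ^ s ≤ levelMajorant P c D s x := by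
  classical
  by_cases hall : ∀ m : ℕ, x ∈ heavyBallCenters P c (D * Real.exp (-m))
  · exact levelMajorant_eq_top hs hall ▸ le_top
  simp only [not_forall] at hall
  set m₀ := Nat.find hall
  have hℓ : levelPotential P c D x ≤ ENNReal.ofReal m₀ := by
    have hlog : Real.log (D / (D * Real.exp (-m₀))) = m₀ := by
      rw [div_mul_cancel_left₀ hD.ne', ← Real.exp_neg, neg_neg, Real.log_exp]
    simpa only [hlog] using levelPotential_le_log (r := D * Real.exp (-m₀)) (by positivity)
      (mul_le_of_le_one_right hD.le (Real.exp_le_one_iff.2 (by simp))) (Nat.find_spec hall)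
  calc EReal.exp (levelPotential P c D x) ^ s ≤ EReal.exp (ENNReal.ofReal m₀) ^ s :=
        ENNReal.rpow_le_rpow (EReal.exp_monotone (EReal.coe_ennreal_le_coe_ennreal_iff.2 hℓ)) hs
    _ = ENNReal.ofReal (Real.exp (s * m₀)) := by
        rw [EReal.coe_ennreal_ofReal, max_eq_left (Nat.cast_nonneg _), EReal.exp_coe,
          ENNReal.ofReal_rpow_of_nonneg (Real.exp_pos _).le hs, ← Real.exp_mul, mul_comm]
    _ ≤ levelMajorant P c D s x := by
        by_cases h : m₀ = 0
        · simp [h, levelMajorant]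
        obtain ⟨m, hm⟩ := Nat.exists_eq_add_one_of_ne_zero h
        rw [hm, Nat.cast_succ]
        exact ofReal_exp_le_levelMajorant (not_not.1 (Nat.find_min hall (by omega)))

lemma ofReal_rpow_measure_ball_div_le_tsum (P : Measure X) [IsProbabilityMeasure P] {n : ℕ}
    (hn : n ≠ 0) {q : ℝ} (hq : (n : ℝ)⁻¹ ≤ q) (x : X) (t : ℝ) :
    ENNReal.ofReal ((P (ball x t)).toReal ^ q / t) ≤
      ∑' k : ℕ, ENNReal.ofReal ((2⁻¹ : ℝ) ^ (k + 1)) *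
        {t | 2⁻¹ ^ ((k + 1) * n) ≤ P (ball x t)}.indicator (fun t => ENNReal.ofReal t⁻¹) t := by
  have hweight : ∀ k : ℕ, ENNReal.ofReal ((2⁻¹ : ℝ) ^ (k + 1)) = 2⁻¹ ^ (k + 1) := fun k => by
    rw [ENNReal.ofReal_pow (by norm_num), ENNReal.ofReal_inv_of_pos two_pos, ENNReal.ofReal_ofNat]
  calc ENNReal.ofReal ((P (ball x t)).toReal ^ q / t) = P (ball x t) ^ q * ENNReal.ofReal t⁻¹ := by
        rw [div_eq_mul_inv, ENNReal.ofReal_mul (by positivity),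
          ← ENNReal.ofReal_rpow_of_nonneg toReal_nonneg (le_trans (by positivity) hq),
          ofReal_toReal (measure_ne_top _ _)]
    _ ≤ (∑' k : ℕ, {k : ℕ | 2⁻¹ ^ ((k + 1) * n) ≤ P (ball x t)}.indicator
          (fun k => (2⁻¹ : ℝ≥0∞) ^ (k + 1)) k) * ENNReal.ofReal t⁻¹ := by
        gcongr
        exact rpow_le_tsum_indicator_inv_two_pow prob_le_one hn hq
    _ = _ := by
        rw [← ENNReal.tsum_mul_right]
        congr 1 with k
        rw [hweight]
        by_cases h : (2⁻¹ : ℝ≥0∞) ^ ((k + 1) * n) ≤ P (ball x t) <;> simp [h]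

lemma lintegral_rpow_measure_ball_le_tsum_levelPotential (P : Measure X) [IsProbabilityMeasure P]
    {n : ℕ} (hn : n ≠ 0) {q : ℝ} (hq : (n : ℝ)⁻¹ ≤ q) (D : ℝ) (x : X) :
    ∫⁻ t in Ioo 0 D, ENNReal.ofReal ((P (ball x t)).toReal ^ q / t) ≤
      ∑' k : ℕ, ENNReal.ofReal ((2⁻¹ : ℝ) ^ (k + 1)) *
        levelPotential P (2⁻¹ ^ ((k + 1) * n)) D x := by
  have hmeas : ∀ k : ℕ, Measurable ({t | (2⁻¹ : ℝ≥0∞) ^ ((k + 1) * n) ≤ P (ball x t)}.indicator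
      fun t => ENNReal.ofReal t⁻¹) := fun k =>
    (ENNReal.measurable_ofReal.comp measurable_inv).indicator
      (measurable_measure_ball_radius P x measurableSet_Ici)
  refine (lintegral_mono (ofReal_rpow_measure_ball_div_le_tsum P hn hq x)).trans_eq ?_
  rw [lintegral_tsum fun k => ((hmeas k).const_mul _).aemeasurable]
  simp_rw [lintegral_const_mul _ (hmeas _), levelPotential]

lemma ofReal_exp_wolffPotential_le_iSup_prod (P : Measure X) [IsProbabilityMeasure P] {n : ℕ}
    (hn : n ≠ 0) {q : ℝ} (hq : (n : ℝ)⁻¹ ≤ q) {D s : ℝ} (hD : 0 < D) (hs : 0 ≤ s) (x : X) :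
    ENNReal.ofReal (Real.exp (s * ∫ t in Ioo 0 D, (P (ball x t)).toReal ^ q / t)) ≤
      ⨆ K, ∏ k ∈ Finset.range K,
        levelMajorant P (2⁻¹ ^ ((k + 1) * n)) D s x ^ ((2⁻¹ : ℝ) ^ (k + 1)) := by
  have hW : ENNReal.ofReal (s * ∫ t in Ioo 0 D, (P (ball x t)).toReal ^ q / t) ≤
      ∑' k : ℕ, ENNReal.ofReal (s * (2⁻¹ : ℝ) ^ (k + 1)) *
        levelPotential P (2⁻¹ ^ ((k + 1) * n)) D x :=
    calc ENNReal.ofReal (s * ∫ t in Ioo 0 D, (P (ball x t)).toReal ^ q / t)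
        = ENNReal.ofReal s * ENNReal.ofReal (∫ t in Ioo 0 D, (P (ball x t)).toReal ^ q / t) :=
          ENNReal.ofReal_mul hs
      _ ≤ ENNReal.ofReal s * ∫⁻ t in Ioo 0 D, ENNReal.ofReal ((P (ball x t)).toReal ^ q / t) := by
          gcongr
          exact ofReal_integral_le_lintegral_ofReal (ae_restrict_of_forall_mem measurableSet_Ioo
            fun t ht => div_nonneg (Real.rpow_nonneg toReal_nonneg q) ht.1.le)
      _ ≤ ENNReal.ofReal s * ∑' k : ℕ, ENNReal.ofReal ((2⁻¹ : ℝ) ^ (k + 1)) *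
            levelPotential P (2⁻¹ ^ ((k + 1) * n)) D x := by
          gcongr
          exact lintegral_rpow_measure_ball_le_tsum_levelPotential P hn hq D x
      _ = _ := by
          rw [← ENNReal.tsum_mul_left]
          congr 1 with k
          rw [ENNReal.ofReal_mul hs, mul_assoc]
  refine (ofReal_exp_le_iSup_prod_rpow (fun k => by positivity) hW).trans
    (iSup_mono fun K => Finset.prod_le_prod' fun k _ => ?_)
  rw [ENNReal.rpow_mul]
  exact ENNReal.rpow_le_rpow (exp_levelPotential_rpow_le_levelMajorant P _ hD hs x) (by positivity)

variable [SecondCountableTopology X] [OpensMeasurableSpace X]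

lemma measurableSet_dist_lt (r : ℝ) : MeasurableSet {z : X × X | dist z.2 z.1 < r} :=
  (isOpen_lt (continuous_snd.dist continuous_fst) continuous_const).measurableSet

lemma measurable_measure_ball (μ : Measure X) [SFinite μ] (r : ℝ) :
    Measurable fun x => μ (ball x r) :=
  measurable_measure_prodMk_left (measurableSet_dist_lt r)

lemma measurableSet_heavyBallCenters (P : Measure X) [SFinite P] (c : ℝ≥0∞) (r : ℝ) :
    MeasurableSet (heavyBallCenters P c r) :=
  measurable_measure_ball P r measurableSet_Ici

lemma lintegral_measure_ball_comm (μ ν : Measure X) [SFinite μ] [SFinite ν] (r : ℝ) :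
    ∫⁻ x, ν (ball x r) ∂μ = ∫⁻ y, μ (ball y r) ∂ν := by
  have hswap : ∀ y : X, (fun x => (x, y)) ⁻¹' {z : X × X | dist z.2 z.1 < r} = ball y r :=
    fun y => by ext x; simp [dist_comm]
  calc ∫⁻ x, ν (ball x r) ∂μ = μ.prod ν {z : X × X | dist z.2 z.1 < r} :=
        (Measure.prod_apply (measurableSet_dist_lt r)).symm
    _ = ∫⁻ y, μ (ball y r) ∂ν := by
        rw [Measure.prod_apply_symm (measurableSet_dist_lt r)]
        simp only [hswap]

lemma measurable_levelMajorant (P : Measure X) [SFinite P] (c : ℝ≥0∞) (D s : ℝ) :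
    Measurable (levelMajorant P c D s) := by
  have hterm : ∀ n : ℕ, Measurable fun x => ENNReal.ofReal (Real.exp (s * (n + 1))) *
      (heavyBallCenters P c (D * Real.exp (-n))).indicator 1 x := fun n =>
    (measurable_const.indicator (measurableSet_heavyBallCenters P c _)).const_mul _
  exact measurable_const.add (Measurable.tsum hterm)

end BallMass

section Haar

variable {E : Type*} [NormedAddCommGroup E] [NormedSpace ℝ E] [FiniteDimensional ℝ E]
  [MeasurableSpace E] [BorelSpace E] (vol : Measure E) [vol.IsAddHaarMeasure] (P : Measure E)
  [IsProbabilityMeasure P]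

lemma addHaar_heavyBallCenters_le {c : ℝ≥0∞} (hc : c ≠ 0) (hc' : c ≠ ∞) (r : ℝ) :
    vol (heavyBallCenters P c r) ≤ vol (ball 0 r) / c := by
  have hFubini : ∫⁻ x, P (ball x r) ∂vol = vol (ball 0 r) := by
    rw [lintegral_measure_ball_comm]
    simp [Measure.addHaar_ball_center vol]
  rw [← hFubini]
  exact meas_ge_le_lintegral_div (measurable_measure_ball P r).aemeasurable hc hc'

lemma setLIntegral_levelMajorant_le [Nontrivial E] (Ω : Set E) {c : ℝ≥0∞} (hc : c ≠ 0)
    (hc' : c ≠ ∞) {D s : ℝ} (hsN : s < Module.finrank ℝ E) :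
    ∫⁻ x in Ω, levelMajorant P c D s x ∂vol ≤
      vol Ω + vol (ball 0 D) / c *
        ENNReal.ofReal (Real.exp s / (1 - Real.exp (s - Module.finrank ℝ E))) := by
  have hlevel : ∀ n : ℕ, vol (heavyBallCenters P c (D * Real.exp (-n))) ≤
      ENNReal.ofReal (Real.exp (-n) ^ Module.finrank ℝ E) * (vol (ball 0 D) / c) := fun n => by
    rw [← mul_div_assoc, ← Measure.addHaar_ball_mul vol 0 (Real.exp_pos _).le, mul_comm]
    exact addHaar_heavyBallCenters_le vol P hc hc' _
  rw [← tsum_ofReal_exp_mul_exp_neg_pow hsN, ← ENNReal.tsum_mul_left]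
  calc ∫⁻ x in Ω, levelMajorant P c D s x ∂vol
      ≤ vol Ω + ∑' n : ℕ, ENNReal.ofReal (Real.exp (s * (n + 1))) *
          vol (heavyBallCenters P c (D * Real.exp (-n))) := by
        unfold levelMajorant
        rw [lintegral_add_left measurable_const, setLIntegral_const, one_mul,
          lintegral_tsum fun n => ((measurable_one.indicator
            (measurableSet_heavyBallCenters P c _)).const_mul _).aemeasurable]
        gcongr with n
        rw [lintegral_const_mul _ (measurable_one.indicator (measurableSet_heavyBallCenters P c _))]
        gcongr
        exact (setLIntegral_le_lintegral _ _).trans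
          (lintegral_indicator_one (measurableSet_heavyBallCenters P c _)).le
    _ ≤ _ := by
        refine add_le_add_right (ENNReal.tsum_le_tsum fun n => ?_) _
        calc _ ≤ ENNReal.ofReal (Real.exp (s * (n + 1))) *
              (ENNReal.ofReal (Real.exp (-n) ^ Module.finrank ℝ E) * (vol (ball 0 D) / c)) := by
              gcongr; exact hlevel n
          _ = _ := by ring

lemma setLIntegral_levelMajorant_inv_two_pow_le [Nontrivial E] {Ω : Set E} {D s : ℝ}
    (hΩ : vol Ω ≤ vol (ball 0 D)) (hsN : s < Module.finrank ℝ E) (m : ℕ) :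
    ∫⁻ x in Ω, levelMajorant P (2⁻¹ ^ m) D s x ∂vol ≤
      2 ^ m * (vol (ball 0 D) *
        ENNReal.ofReal (1 + Real.exp s / (1 - Real.exp (s - Module.finrank ℝ E)))) := by
  set G := Real.exp s / (1 - Real.exp (s - Module.finrank ℝ E))
  have hG : 0 ≤ G := div_nonneg (Real.exp_pos _).le
    (sub_nonneg.2 (Real.exp_le_one_iff.2 (by linarith)))
  refine (setLIntegral_levelMajorant_le vol P Ω (by simp) (by simp) hsN).trans ?_
  rw [ENNReal.div_eq_inv_mul, ENNReal.inv_pow, inv_inv]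
  calc vol Ω + 2 ^ m * vol (ball 0 D) * ENNReal.ofReal G
      ≤ 2 ^ m * vol (ball 0 D) + 2 ^ m * vol (ball 0 D) * ENNReal.ofReal G := by
        gcongr
        exact hΩ.trans (le_mul_of_one_le_left' (one_le_pow₀ one_le_two))
    _ = 2 ^ m * (vol (ball 0 D) * ENNReal.ofReal (1 + G)) := by
        rw [ENNReal.ofReal_add zero_le_one hG, ENNReal.ofReal_one]
        ring

lemma setLIntegral_prod_levelMajorant_rpow_le [Nontrivial E] {Ω : Set E} {D s : ℝ}
    (hΩ : vol Ω ≤ vol (ball 0 D)) (hsN : s < Module.finrank ℝ E) (n K : ℕ) :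
    ∫⁻ x in Ω, ∏ k ∈ Finset.range K,
        levelMajorant P (2⁻¹ ^ ((k + 1) * n)) D s x ^ ((2⁻¹ : ℝ) ^ (k + 1)) ∂vol ≤
      4 ^ n * (vol (ball 0 D) *
        ENNReal.ofReal (1 + Real.exp s / (1 - Real.exp (s - Module.finrank ℝ E)))) := by
  set Y := vol (ball 0 D) *
    ENNReal.ofReal (1 + Real.exp s / (1 - Real.exp (s - Module.finrank ℝ E)))
  set a : ℕ → ℝ := fun k => (2⁻¹ : ℝ) ^ (k + 1)
  have ha : ∀ k ∈ Finset.range K, 0 ≤ a k := fun k _ => by positivity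
  have ha1 : 0 ≤ 1 - ∑ k ∈ Finset.range K, a k := sub_nonneg.2 (sum_range_inv_two_pow_succ_le_one K)
  have hΩY : vol Ω ≤ Y := hΩ.trans <| le_mul_of_one_le_right' <| ENNReal.one_le_ofReal.2 <|
    le_add_of_nonneg_right <| div_nonneg (Real.exp_pos _).le
      (sub_nonneg.2 (Real.exp_le_one_iff.2 (by linarith)))
  calc ∫⁻ x in Ω, ∏ k ∈ Finset.range K,
          levelMajorant P (2⁻¹ ^ ((k + 1) * n)) D s x ^ a k ∂vol
      ≤ (∏ k ∈ Finset.range K,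
            (∫⁻ x in Ω, levelMajorant P (2⁻¹ ^ ((k + 1) * n)) D s x ∂vol) ^ a k) *
          vol Ω ^ (1 - ∑ k ∈ Finset.range K, a k) := by
        have hHolder := lintegral_prod_rpow_le_of_sum_le_one (μ := vol.restrict Ω)
          (Finset.range K) (f := fun k => levelMajorant P (2⁻¹ ^ ((k + 1) * n)) D s)
          (fun k _ => (measurable_levelMajorant P _ D s).aemeasurable)
          (sum_range_inv_two_pow_succ_le_one K) ha
        rwa [Measure.restrict_apply_univ] at hHolder
    _ ≤ (∏ k ∈ Finset.range K, ((2 ^ n) ^ (k + 1) * Y) ^ a k) *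
          Y ^ (1 - ∑ k ∈ Finset.range K, a k) := by
        refine mul_le_mul' (Finset.prod_le_prod' fun k hk => ENNReal.rpow_le_rpow ?_ (ha k hk))
          (ENNReal.rpow_le_rpow hΩY ha1)
        rw [← pow_mul']
        exact setLIntegral_levelMajorant_inv_two_pow_le vol P hΩ hsN _
    _ = (2 ^ n) ^ (∑ k ∈ Finset.range K, ((k : ℝ) + 1) * a k) * Y :=
        prod_pow_succ_mul_rpow_mul_rpow_one_sub_sum _ _ ha (sum_range_inv_two_pow_succ_le_one K)
    _ ≤ (2 ^ n) ^ (2 : ℝ) * Y := by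
        gcongr
        · exact one_le_pow₀ one_le_two
        · exact sum_range_succ_mul_inv_two_pow_succ_le_two K
    _ = 4 ^ n * Y := by
        rw [ENNReal.rpow_two, ← pow_mul, mul_comm n 2, pow_mul]
        norm_num

theorem setLIntegral_ofReal_exp_wolffPotential_le {Ω : Set E} {D : ℝ}
    (hΩ : vol Ω ≤ vol (ball 0 D)) (hD : 0 < D) (hN : 2 ≤ Module.finrank ℝ E) {q : ℝ}
    (hq : ((Module.finrank ℝ E : ℝ) - 1)⁻¹ ≤ q) {s : ℝ} (hs : 0 ≤ s)
    (hsN : s < Module.finrank ℝ E) :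
    ∫⁻ x in Ω, ENNReal.ofReal (Real.exp (s * ∫ t in Ioo 0 D, (P (ball x t)).toReal ^ q / t))
        ∂vol ≤
      4 ^ (Module.finrank ℝ E - 1) * (vol (ball 0 D) *
        ENNReal.ofReal (1 + Real.exp s / (1 - Real.exp (s - Module.finrank ℝ E)))) := by
  have : Nontrivial E := Module.nontrivial_of_finrank_pos (R := ℝ) (by omega)
  set n := Module.finrank ℝ E - 1
  have hq' : (n : ℝ)⁻¹ ≤ q := by rwa [Nat.cast_sub (by omega), Nat.cast_one]
  set Φ : ℕ → E → ℝ≥0∞ := fun K x => ∏ k ∈ Finset.range K,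
    levelMajorant P (2⁻¹ ^ ((k + 1) * n)) D s x ^ ((2⁻¹ : ℝ) ^ (k + 1))
  have hΦ : Monotone Φ := fun K L hKL x =>
    Finset.prod_le_prod_of_subset_of_one_le' (Finset.range_subset_range.2 hKL) fun k _ _ =>
      ENNReal.one_le_rpow le_self_add (by positivity)
  calc ∫⁻ x in Ω, ENNReal.ofReal (Real.exp (s * ∫ t in Ioo 0 D, (P (ball x t)).toReal ^ q / t))
        ∂vol
      ≤ ∫⁻ x in Ω, ⨆ K, Φ K x ∂vol :=
        lintegral_mono fun x => ofReal_exp_wolffPotential_le_iSup_prod P (by omega) hq' hD hs x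
    _ = ⨆ K, ∫⁻ x in Ω, Φ K x ∂vol := lintegral_iSup (fun K => Finset.measurable_prod _
          fun k _ => (measurable_levelMajorant P _ D s).pow_const _) hΦ
    _ ≤ _ := iSup_le fun K => setLIntegral_prod_levelMajorant_rpow_le vol P hΩ hsN n K

theorem setLIntegral_ofReal_exp_wolffPotential_le_div_pow {Ω : Set E} {D : ℝ}
    (hΩ : vol Ω ≤ vol (ball 0 D)) (hD : 0 < D) (hN : 2 ≤ Module.finrank ℝ E) {q : ℝ}
    (hq : ((Module.finrank ℝ E : ℝ) - 1)⁻¹ ≤ q) {δ : ℝ} (hδ0 : 0 < δ) (hδ1 : δ ≤ 1) :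
    ∫⁻ x in Ω, ENNReal.ofReal (Real.exp (Module.finrank ℝ E * (1 - δ) *
        ∫ t in Ioo 0 D, (P (ball x t)).toReal ^ q / t)) ∂vol ≤
      ENNReal.ofReal (3 * 4 ^ Module.finrank ℝ E * Real.exp (Module.finrank ℝ E) /
        δ ^ (Module.finrank ℝ E + 1)) * vol (ball 0 D) := by
  have hN' : (0 : ℝ) < Module.finrank ℝ E := by exact_mod_cast (by omega : 0 < Module.finrank ℝ E)
  refine (setLIntegral_ofReal_exp_wolffPotential_le vol P hΩ hD hN hq (by nlinarith)
    (by nlinarith)).trans ?_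
  calc _ = ENNReal.ofReal (4 ^ (Module.finrank ℝ E - 1) * (1 + Real.exp (Module.finrank ℝ E *
        (1 - δ)) / (1 - Real.exp (Module.finrank ℝ E * (1 - δ) - Module.finrank ℝ E)))) *
          vol (ball 0 D) := by
        rw [ENNReal.ofReal_mul (by positivity), ENNReal.ofReal_pow (by norm_num),
          ENNReal.ofReal_ofNat]
        ring
    _ ≤ _ := by
        gcongr
        exact four_pow_mul_one_add_exp_div_le (by omega) hδ0 hδ1

end Haar

lemma Bornology.IsBounded.addHaar_le_addHaar_ball_diam {E : Type*} [NormedAddCommGroup E]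
    [NormedSpace ℝ E] [FiniteDimensional ℝ E] [Nontrivial E] [MeasurableSpace E] [BorelSpace E]
    (vol : Measure E) [vol.IsAddHaarMeasure] {Ω : Set E} (hΩ : Bornology.IsBounded Ω) :
    vol Ω ≤ vol (ball 0 (diam Ω)) := by
  rcases Ω.eq_empty_or_nonempty with rfl | ⟨x₀, hx₀⟩
  · simp
  calc vol Ω ≤ vol (closedBall x₀ (diam Ω)) :=
        measure_mono fun y hy => mem_closedBall.2 (dist_le_diam_of_mem hΩ hy hx₀)
    _ = vol (ball 0 (diam Ω)) := by
        rw [Measure.addHaar_closedBall_eq_addHaar_ball, Measure.addHaar_ball_center]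

lemma setIntegral_rpow_measure_ball_div_eq {X : Type*} [PseudoMetricSpace X] [MeasurableSpace X]
    (μ : Measure X) (q D : ℝ) (x : X) :
    (∫ t in Ioo 0 D, (μ (ball x t)).toReal ^ q / t) / (μ univ).toReal ^ q =
      ∫ t in Ioo 0 D, (((μ univ)⁻¹ • μ) (ball x t)).toReal ^ q / t := by
  rw [← integral_div]
  congr 1 with t
  rw [Measure.smul_apply, smul_eq_mul, toReal_mul, toReal_inv,
    Real.mul_rpow (inv_nonneg.2 toReal_nonneg) toReal_nonneg, Real.inv_rpow toReal_nonneg]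
  ring

theorem stmt7_general (N : ℕ) :
    ∃ c : ℝ, 0 < c ∧
      ∀ (Ω : Set (EuclideanSpace ℝ (Fin N))) (p D : ℝ)
        (μ : Measure (EuclideanSpace ℝ (Fin N))),
        IsOpen Ω → Ω.Nonempty → Bornology.IsBounded Ω → D = Metric.diam Ω →
        1 < p → p ≤ (N : ℝ) → μ Set.univ < ⊤ → μ Ωᶜ = 0 → 0 < μ Set.univ →
        ∀ δ ∈ Set.Ioo (0 : ℝ) 1,
          ∫ x in Ω, Real.exp ((N : ℝ) * (1 - δ) *
              (∫ t in Set.Ioo (0 : ℝ) D, (μ (ball x t)).toReal ^ (1 / (p - 1)) / t) /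
              (μ Set.univ).toReal ^ (1 / (p - 1))) ≤
            c * (volume (ball (0 : EuclideanSpace ℝ (Fin N)) D)).toReal / δ ^ (N + 1) := by
  refine ⟨3 * 4 ^ N * Real.exp N, by positivity, ?_⟩
  rintro Ω p D μ hΩo hΩne hΩb rfl hp hpN hμfin - hμpos δ ⟨hδ0, hδ1⟩
  have hfinrank : Module.finrank ℝ (EuclideanSpace ℝ (Fin N)) = N := finrank_euclideanSpace_fin
  have hN : 2 ≤ N := by exact_mod_cast hp.trans_le hpN
  have : Nontrivial (EuclideanSpace ℝ (Fin N)) :=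
    Module.nontrivial_of_finrank_pos (R := ℝ) (by omega)
  have : IsFiniteMeasure μ := ⟨hμfin⟩
  have : NeZero μ := ⟨fun h => by simp [h] at hμpos⟩
  have hΩ := hΩb.addHaar_le_addHaar_ball_diam volume
  obtain ⟨x₀, hx₀⟩ := hΩne
  have hD : 0 < diam Ω := diam_pos (infinite_of_mem_nhds x₀ (hΩo.mem_nhds hx₀)).nontrivial hΩb
  have hq : ((Module.finrank ℝ (EuclideanSpace ℝ (Fin N)) : ℝ) - 1)⁻¹ ≤ 1 / (p - 1) := by
    rw [hfinrank, one_div]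
    exact inv_anti₀ (by linarith) (by linarith)
  have hbound := setLIntegral_ofReal_exp_wolffPotential_le_div_pow volume ((μ univ)⁻¹ • μ) hΩ hD
    (by rw [hfinrank]; exact hN) hq hδ0 hδ1.le
  rw [hfinrank] at hbound
  simp_rw [mul_div_assoc, setIntegral_rpow_measure_ball_div_eq]
  calc _ ≤ (ENNReal.ofReal (3 * 4 ^ N * Real.exp N / δ ^ (N + 1)) *
        volume (ball (0 : EuclideanSpace ℝ (Fin N)) (diam Ω))).toReal :=
        (ENNReal.ofReal_le_iff_le_toReal (by finiteness)).1
          ((ofReal_integral_le_lintegral_ofReal (ae_of_all _ fun x => (Real.exp_pos _).le)).trans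
            hbound)
    _ = _ := by
        rw [toReal_mul, toReal_ofReal (by positivity)]
        ring

theorem stmt7 (N : ℕ) (hN : 1 ≤ N) :
    ∃ c : ℝ, 0 < c ∧
      ∀ (Ω : Set (EuclideanSpace ℝ (Fin N))) (p D : ℝ)
        (μ : Measure (EuclideanSpace ℝ (Fin N))),
        IsOpen Ω → Ω.Nonempty → Bornology.IsBounded Ω → D = Metric.diam Ω →
        1 < p → p ≤ (N : ℝ) → μ Set.univ < ⊤ → μ Ωᶜ = 0 → 0 < μ Set.univ →
        ∀ δ ∈ Set.Ioo (0 : ℝ) 1,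
          ∫ x in Ω, Real.exp ((N : ℝ) * (1 - δ) *
              (∫ t in Set.Ioo (0 : ℝ) D, (μ (ball x t)).toReal ^ (1 / (p - 1)) / t) /
              (μ Set.univ).toReal ^ (1 / (p - 1))) ≤
            c * (volume (ball (0 : EuclideanSpace ℝ (Fin N)) D)).toReal / δ ^ (N + 1) :=
  stmt7_general N
end
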